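/- Let ℓ be an ordered special length vector of type {1, n−2, n−1}. Then there are at most three possibilities for the chamber of ℓ up to permutation, distinguished by which of {n−1,n} and {n−2,n} are short; moreover {1, n−2, n} is long with respect to ℓ, so if {n−2,n} is short then {j,n−2,n} is long for all j ≥ 1. -/

import Mathlib

open Finset

/-- The sum of `ℓ` over `J` is less than the sum over the complement in `{1,…,n}`. -/
def Short (n : ℕ) (ℓ : ℕ → ℝ) (J : Finset ℕ) : Prop :=
  ∑ j ∈ J, ℓ j < ∑ j ∈ Finset.Icc 1 n \ J, ℓ j

/-- `J` is long iff its complement in `{1,…,n}` is short. -/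
def Long (n : ℕ) (ℓ : ℕ → ℝ) (J : Finset ℕ) : Prop :=
  Short n ℓ (Finset.Icc 1 n \ J)

/-- All entries positive. -/
def LengthVec (n : ℕ) (ℓ : ℕ → ℝ) : Prop := ∀ i ∈ Finset.Icc 1 n, 0 < ℓ i

/-- `ℓ₁ ≤ … ≤ ℓₙ`. -/
def OrderedVec (n : ℕ) (ℓ : ℕ → ℝ) : Prop :=
  ∀ i j : ℕ, 1 ≤ i → i ≤ j → j ≤ n → ℓ i ≤ ℓ j

/-- No subset has sum equal to the sum of its complement. -/
def Generic (n : ℕ) (ℓ : ℕ → ℝ) : Prop :=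
  ∀ J ⊆ Finset.Icc 1 n, ∑ j ∈ J, ℓ j ≠ ∑ j ∈ Finset.Icc 1 n \ J, ℓ j

/-- Dominance order: an injective order-preserving map `φ : J₁ → J₂` with `x ≤ φ x`. -/
def DomLe (J₁ J₂ : Finset ℕ) : Prop :=
  ∃ φ : ℕ → ℕ, Set.InjOn φ ↑J₁ ∧ (∀ x ∈ J₁, φ x ∈ J₂) ∧
    (∀ x ∈ J₁, ∀ y ∈ J₁, x < y → φ x < φ y) ∧ ∀ x ∈ J₁, x ≤ φ x

/-- `Ṡ_k(ℓ)`: subsets `J ⊆ {1,…,n−1}` of cardinality `k` with `J ∪ {n}` short. -/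
def SdotSet (n : ℕ) (ℓ : ℕ → ℝ) (k : ℕ) : Set (Finset ℕ) :=
  {J | J ⊆ Finset.Icc 1 (n-1) ∧ J.card = k ∧ Short n ℓ (insert n J)}

/-- `Ṡ(ℓ)`: subsets `J ⊆ {1,…,n−1}` with `J ∪ {n}` short. -/
def Sdot (n : ℕ) (ℓ : ℕ → ℝ) : Set (Finset ℕ) :=
  {J | J ⊆ Finset.Icc 1 (n-1) ∧ Short n ℓ (insert n J)}

/-- Special: `Ṡ_{n−3}(ℓ) = ∅ ≠ Ṡ_{n−4}(ℓ)`. -/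
def SpecialVec (n : ℕ) (ℓ : ℕ → ℝ) : Prop :=
  SdotSet n ℓ (n-3) = ∅ ∧ SdotSet n ℓ (n-4) ≠ ∅

/-- `T` is the type of `ℓ`: the minimal three-element long subset of `{1,…,n−1}`. -/
def IsType (n : ℕ) (ℓ : ℕ → ℝ) (T : Finset ℕ) : Prop :=
  T ⊆ Finset.Icc 1 (n-1) ∧ T.card = 3 ∧ Long n ℓ T ∧
    ∀ T' ⊆ Finset.Icc 1 (n-1), T'.card = 3 → Long n ℓ T' → DomLe T T'

/-!
Since `ℓ` is ordered, every triple dominating the long triple `{1, n-2, n-1}` is long; in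
particular `{a, b, n}` is long whenever `1 ≤ a < b` and `n - 2 ≤ b`. Hence if `J ∪ {n}` is short
and `J` contains `n - 2` or `n - 1`, then `J` is that singleton. Otherwise `J ⊆ {1, …, n-3}`:
the full interval is excluded by `Ṡ_{n-3}(ℓ) = ∅`, and a proper subset missing some `a` lies,
together with `n`, in the complement of the long set `{a, n-2, n-1}`. So `Ṡ(ℓ)` consists of the
proper subsets of `{1, …, n-3}` and of those singletons `{n-2}`, `{n-1}` whose pair with `n` is
short.
-/

section Chambers

variable {n : ℕ} {ℓ : ℕ → ℝ}

theorem short_iff_two_mul_sum_lt {J : Finset ℕ} (hJ : J ⊆ Icc 1 n) :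
    Short n ℓ J ↔ 2 * ∑ j ∈ J, ℓ j < ∑ j ∈ Icc 1 n, ℓ j := by
  rw [Short, sum_sdiff_eq_sub hJ]
  constructor <;> intro h <;> linarith

theorem long_iff_sum_lt_two_mul {J : Finset ℕ} (hJ : J ⊆ Icc 1 n) :
    Long n ℓ J ↔ ∑ j ∈ Icc 1 n, ℓ j < 2 * ∑ j ∈ J, ℓ j := by
  rw [Long, short_iff_two_mul_sum_lt sdiff_subset, sum_sdiff_eq_sub hJ]
  constructor <;> intro h <;> linarith

theorem Short.of_subset (hpos : LengthVec n ℓ) {K K' : Finset ℕ} (hK : K ⊆ Icc 1 n)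
    (h : Short n ℓ K) (hK' : K' ⊆ K) : Short n ℓ K' := by
  rw [short_iff_two_mul_sum_lt hK] at h
  rw [short_iff_two_mul_sum_lt (hK'.trans hK)]
  have : ∑ j ∈ K', ℓ j ≤ ∑ j ∈ K, ℓ j :=
    sum_le_sum_of_subset_of_nonneg hK' fun i hi _ ↦ (hpos i (hK hi)).le
  linarith

theorem Short.not_long {K : Finset ℕ} (hK : K ⊆ Icc 1 n) (h : Short n ℓ K) :
    ¬Long n ℓ K := by
  rw [short_iff_two_mul_sum_lt hK] at h
  rw [long_iff_sum_lt_two_mul hK]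
  linarith

theorem Short.pair_of_le (hord : OrderedVec n ℓ) {a b c : ℕ} (ha : 1 ≤ a) (hab : a ≤ b)
    (hbc : b < c) (hc : c ≤ n) (h : Short n ℓ {b, c}) : Short n ℓ {a, c} := by
  have hsub : ∀ x, 1 ≤ x → x ≤ n → ({x, c} : Finset ℕ) ⊆ Icc 1 n := fun x hx hxn ↦ by
    simp only [insert_subset_iff, singleton_subset_iff, mem_Icc]
    omega
  rw [short_iff_two_mul_sum_lt (hsub b (by omega) (by omega)), sum_pair (by omega)] at h
  rw [short_iff_two_mul_sum_lt (hsub a ha (by omega)), sum_pair (by omega)]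
  linarith [hord a b ha hab (by omega)]

theorem sum_triple {a b c : ℕ} (hab : a < b) (hbc : b < c) :
    ∑ j ∈ ({a, b, c} : Finset ℕ), ℓ j = ℓ a + ℓ b + ℓ c := by
  rw [sum_insert (by simp; omega), sum_pair (by omega), add_assoc]

theorem triple_subset_Icc {a b c : ℕ} (ha : 1 ≤ a) (hab : a < b) (hbc : b < c) (hc : c ≤ n) :
    ({a, b, c} : Finset ℕ) ⊆ Icc 1 n := by
  simp only [insert_subset_iff, singleton_subset_iff, mem_Icc]
  omega

theorem Long.triple_of_le (hord : OrderedVec n ℓ) {a b c a' b' c' : ℕ}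
    (h : Long n ℓ {a, b, c}) (ha : 1 ≤ a) (hab : a < b) (hbc : b < c)
    (haa' : a ≤ a') (hbb' : b ≤ b') (hcc' : c ≤ c')
    (hab' : a' < b') (hbc' : b' < c') (hc' : c' ≤ n) : Long n ℓ {a', b', c'} := by
  rw [long_iff_sum_lt_two_mul (triple_subset_Icc ha hab hbc (by omega)), sum_triple hab hbc] at h
  rw [long_iff_sum_lt_two_mul (triple_subset_Icc (by omega) hab' hbc' hc'), sum_triple hab' hbc']
  linarith [hord a a' ha haa' (by omega), hord b b' (by omega) hbb' (by omega),
    hord c c' (by omega) hcc' hc']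

theorem IsType.long {T : Finset ℕ} (h : IsType n ℓ T) : Long n ℓ T :=
  h.2.2.1

theorem singleton_mem_sdot_iff {b : ℕ} :
    {b} ∈ Sdot n ℓ ↔ b ∈ Icc 1 (n - 1) ∧ Short n ℓ {b, n} := by
  rw [Sdot, Set.mem_ofPred_eq, singleton_subset_iff, pair_comm]

section TypeOne

variable (hn : 4 ≤ n) (hpos : LengthVec n ℓ) (hord : OrderedVec n ℓ)
  (hT : Long n ℓ {1, n - 2, n - 1})
include hn hord hT

theorem long_of_type_one {a b c : ℕ} (ha : 1 ≤ a) (hab : a < b) (hb : n - 2 ≤ b) (hbc : b < c)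
    (hc : c ≤ n) : Long n ℓ {a, b, c} :=
  hT.triple_of_le hord le_rfl (by omega) (by omega) ha hb (by omega) hab hbc hc

include hpos

theorem eq_singleton_of_mem_sdot {J : Finset ℕ} (hJ : J ∈ Sdot n ℓ) {b : ℕ} (hb : b ∈ J)
    (hbn : n - 2 ≤ b) : J = {b} := by
  obtain ⟨hJsub, hJshort⟩ := hJ
  have hins : insert n J ⊆ Icc 1 n :=
    insert_subset (by simp; omega) (hJsub.trans (Icc_subset_Icc_right (by omega)))
  have hle : ∀ x ∈ J, 1 ≤ x ∧ x ≤ n - 1 := fun x hx ↦ mem_Icc.mp (hJsub hx)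
  have no_pair : ∀ x ∈ J, ∀ y ∈ J, x < y → n - 2 ≤ y → False := fun x hx y hy hxy hy' ↦ by
    have hsub : ({x, y, n} : Finset ℕ) ⊆ insert n J := by
      simp [insert_subset_iff, hx, hy]
    exact (hJshort.of_subset hpos hins hsub).not_long
      (triple_subset_Icc (hle x hx).1 hxy (by have := hle y hy; omega) le_rfl)
      (long_of_type_one hn hord hT (hle x hx).1 hxy hy' (by have := hle y hy; omega) le_rfl)
  refine eq_singleton_iff_unique_mem.mpr ⟨hb, fun x hx ↦ ?_⟩
  rcases lt_trichotomy x b with hxb | hxb | hxb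
  · exact (no_pair x hx b hb hxb hbn).elim
  · exact hxb
  · exact (no_pair b hb x hx hxb (by omega)).elim

theorem mem_sdot_of_ssubset {J : Finset ℕ} (hJ : J ⊂ Icc 1 (n - 3)) : J ∈ Sdot n ℓ := by
  obtain ⟨a, haI, haJ⟩ := exists_of_ssubset hJ
  have ha := mem_Icc.mp haI
  refine ⟨hJ.subset.trans (Icc_subset_Icc_right (by omega)), ?_⟩
  have hlong :=
    long_of_type_one (c := n - 1) hn hord hT ha.1 (by omega) le_rfl (by omega) (by omega)
  refine Short.of_subset hpos sdiff_subset hlong fun x hx ↦ ?_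
  have hxJ : x ∈ J → 1 ≤ x ∧ x ≤ n - 3 := fun h ↦ mem_Icc.mp (hJ.subset h)
  simp only [mem_insert, mem_sdiff, mem_Icc, mem_singleton] at hx ⊢
  rcases hx with rfl | hx
  · omega
  · have := hxJ hx
    exact ⟨by omega, fun h ↦ by rcases h with rfl | h | h <;> [exact haJ hx; omega; omega]⟩

theorem mem_sdot_iff (hS : SdotSet n ℓ (n - 3) = ∅) (J : Finset ℕ) :
    J ∈ Sdot n ℓ ↔ J ⊂ Icc 1 (n - 3) ∨ (J = {n - 2} ∧ Short n ℓ {n - 2, n}) ∨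
      (J = {n - 1} ∧ Short n ℓ {n - 1, n}) := by
  constructor
  · intro hJ
    by_cases hJsub : J ⊆ Icc 1 (n - 3)
    · refine Or.inl (Finset.ssubset_iff_subset_ne.mpr ⟨hJsub, fun hJeq ↦ ?_⟩)
      have hmem : J ∈ SdotSet n ℓ (n - 3) := ⟨hJ.1, by rw [hJeq, Nat.card_Icc]; omega, hJ.2⟩
      simp [hS] at hmem
    · obtain ⟨b, hbJ, hb⟩ := not_subset.mp hJsub
      have hb' := mem_Icc.mp (hJ.1 hbJ)
      rw [mem_Icc] at hb
      have hJb := eq_singleton_of_mem_sdot hn hpos hord hT hJ hbJ (by omega)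
      have hshort := (singleton_mem_sdot_iff.mp (hJb ▸ hJ)).2
      obtain rfl | rfl : b = n - 2 ∨ b = n - 1 := by omega
      exacts [Or.inr (Or.inl ⟨hJb, hshort⟩), Or.inr (Or.inr ⟨hJb, hshort⟩)]
  · rintro (hJ | ⟨rfl, hs⟩ | ⟨rfl, hs⟩)
    · exact mem_sdot_of_ssubset hn hpos hord hT hJ
    all_goals exact singleton_mem_sdot_iff.mpr ⟨mem_Icc.mpr (by omega), hs⟩

end TypeOne

end Chambers

theorem type_one_chambers_general (n : ℕ) (ℓ : ℕ → ℝ) (hn : 5 ≤ n)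
    (hpos : LengthVec n ℓ) (hord : OrderedVec n ℓ)
    (hspec : SpecialVec n ℓ) (hT : IsType n ℓ {1, n-2, n-1}) :
    Long n ℓ {1, n-2, n} ∧
    (Short n ℓ {n-2, n} → ∀ j : ℕ, 1 ≤ j → j ≤ n-3 → Long n ℓ {j, n-2, n}) ∧
    (Short n ℓ {n-1, n} → Short n ℓ {n-2, n}) ∧
    (∀ ℓ' : ℕ → ℝ, LengthVec n ℓ' → OrderedVec n ℓ' → Generic n ℓ' →
      SpecialVec n ℓ' → IsType n ℓ' {1, n-2, n-1} →
      (Short n ℓ {n-1, n} ↔ Short n ℓ' {n-1, n}) →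
      (Short n ℓ {n-2, n} ↔ Short n ℓ' {n-2, n}) →
      Sdot n ℓ = Sdot n ℓ') := by
  have hn4 : 4 ≤ n := by omega
  have hLT := hT.long
  refine ⟨long_of_type_one hn4 hord hLT le_rfl (by omega) le_rfl (by omega) le_rfl,
    fun _ j hj hj' ↦ long_of_type_one hn4 hord hLT hj (by omega) le_rfl (by omega) le_rfl,
    Short.pair_of_le hord (by omega) (by omega) (by omega) le_rfl, ?_⟩
  intro ℓ' hpos' hord' _ hspec' hT' h₁ h₂
  ext J
  rw [mem_sdot_iff hn4 hpos hord hLT hspec.1, mem_sdot_iff hn4 hpos' hord' hT'.long hspec'.1,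
    h₁, h₂]

/-- For type {1,n−2,n−1}: {1,n−2,n} is long, so if {n−2,n} is short
then {j,n−2,n} is long for all j ≥ 1; and the chamber (i.e. Ṡ(ℓ)) is completely
determined by the type together with the shortness of {n−1,n} and {n−2,n},
giving at most three chambers up to permutation. -/
theorem type_one_chambers (n : ℕ) (ℓ : ℕ → ℝ) (hn : 5 ≤ n)
    (hpos : LengthVec n ℓ) (hord : OrderedVec n ℓ) (hgen : Generic n ℓ)
    (hspec : SpecialVec n ℓ) (hT : IsType n ℓ {1, n-2, n-1}) :
    Long n ℓ {1, n-2, n} ∧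
    (Short n ℓ {n-2, n} → ∀ j : ℕ, 1 ≤ j → j ≤ n-3 → Long n ℓ {j, n-2, n}) ∧
    (Short n ℓ {n-1, n} → Short n ℓ {n-2, n}) ∧
    (∀ ℓ' : ℕ → ℝ, LengthVec n ℓ' → OrderedVec n ℓ' → Generic n ℓ' →
      SpecialVec n ℓ' → IsType n ℓ' {1, n-2, n-1} →
      (Short n ℓ {n-1, n} ↔ Short n ℓ' {n-1, n}) →
      (Short n ℓ {n-2, n} ↔ Short n ℓ' {n-2, n}) →
      Sdot n ℓ = Sdot n ℓ') :=
  type_one_chambers_general n ℓ hn hpos hord hspec hT
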